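/- arXiv:1703.06977 — 2 statements merged into one kernel-verified Lean document; each statement's English description precedes it below -/
import Mathlib

section
/- Let A be a free finitely generated abelian group equipped with a commutative ring structure and a ℤ-linear map χ : A → ℤ such that the symmetric pairing ⟨x,y⟩ := χ(x·y) is unimodular (the induced map A → Hom(A,ℤ) is bijective). Let A = F⁰A ⊇ F¹A ⊇ … ⊇ F^d A ⊇ F^{d+1}A = 0 be a decreasing filtration by subgroups that is multiplicative (FⁱA·FʲA ⊆ F^{i+j}A for all i,j ≥ 0, where F^k A = 0 for k ≥ d+1) and satisfies rk(F^iA/F^{i+1}A) = rk(F^{d-i}A/F^{d-i+1}A) for each 0 ≤ i ≤ d. Suppose the filtration splits, i.e. for each 0 ≤ i ≤ d the quotient A/F^iA is torsion-free. Then for each 0 ≤ i ≤ d, the induced pairing (F^iA/F^{i+1}A) ⊗ (F^{d-i}A/F^{d-i+1}A) → ℤ, sending [x]⊗[y] to χ(x·y), is well-defined and unimodular, i.e. the induced map F^iA/F^{i+1}A → Hom(F^{d-i}A/F^{d-i+1}A, ℤ) is bijective. -/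
/-!
Unimodularity says that `φ : a ↦ χ (a * ·)` is an isomorphism `A ≃ Hom(A, ℤ)`. Multiplicativity
gives `φ (F (d + 1 - j)) ⊆ (F j)^⊥`. Telescoping the rank symmetry gives
`rk F (d + 1 - j) + rk F j = rk A`, which is also `rk (F j)^⊥ + rk F j` because `A ⧸ F j` is free;
since `Hom(A, ℤ) ⧸ φ (F (d + 1 - j)) ≅ A ⧸ F (d + 1 - j)` is torsion-free, the inclusion is an
equality. For `j = d - i` and `j = d - i + 1` these identities make the induced pairing
`grⁱ × gr^{d-i} → ℤ` injective; it is surjective because `F (d - i)` is a direct summand of `A`,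
so every functional on it extends to `A`.
-/

open Module Submodule LinearMap

section PrincipalIdealDomain

variable {R M : Type*} [CommRing R] [IsDomain R] [IsPrincipalIdealRing R]
  [AddCommGroup M] [Module R M] [Module.Finite R M]

theorem Submodule.finrank_quotient_comap_subtype_add_finrank {N W : Submodule R M} (h : N ≤ W) :
    finrank R (W ⧸ N.comap W.subtype) + finrank R N = finrank R W := by
  rw [← (comapSubtypeEquivOfLe h).finrank_eq, finrank_quotient_add_finrank]

theorem Submodule.eq_of_le_of_finrank_le_of_isTorsionFree {N W : Submodule R M}
    [IsTorsionFree R (M ⧸ N)] (hNW : N ≤ W) (hr : finrank R W ≤ finrank R N) : N = W := by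
  have hquot : finrank R (W ⧸ N.comap W.subtype) = 0 := by
    have := finrank_quotient_comap_subtype_add_finrank hNW
    omega
  refine le_antisymm hNW fun w hw => ?_
  obtain ⟨a, ha, haw⟩ := Module.finrank_eq_zero_iff.mp hquot (Quotient.mk ⟨w, hw⟩)
  rw [← Quotient.mk_smul, Quotient.mk_eq_zero] at haw
  have : a • N.mkQ w = 0 := by rwa [← map_smul, mkQ_apply, Quotient.mk_eq_zero]
  rwa [smul_eq_zero_iff_right ha, mkQ_apply, Quotient.mk_eq_zero] at this

theorem Submodule.finrank_dualAnnihilator (N : Submodule R M) [IsTorsionFree R (M ⧸ N)] :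
    finrank R N.dualAnnihilator = finrank R (M ⧸ N) := by
  rw [← N.dualQuotEquivDualAnnihilator.finrank_eq,
    ← (Free.chooseBasis R (M ⧸ N)).toDualEquiv.finrank_eq]

end PrincipalIdealDomain

theorem Submodule.dualRestrict_surjective_of_projective {R M : Type*} [CommRing R]
    [AddCommGroup M] [Module R M] (N : Submodule R M) [Projective R (M ⧸ N)] :
    Function.Surjective N.dualRestrict := by
  obtain ⟨s, hs⟩ := N.mkQ.exists_rightInverse_of_surjective N.range_mkQ
  have hmem (x : M) : x - s (N.mkQ x) ∈ N := by
    rw [← Quotient.mk_eq_zero, ← mkQ_apply, map_sub, ← comp_apply (f := N.mkQ), hs, id_apply,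
      sub_self]
  let r : M →ₗ[R] N := codRestrict N (LinearMap.id - s ∘ₗ N.mkQ) hmem
  refine fun f => ⟨f ∘ₗ r, LinearMap.ext fun x => congrArg f (Subtype.ext ?_)⟩
  simp [r, (Quotient.mk_eq_zero N).2 x.2]

namespace LinearMap

variable {R M : Type*} [CommRing R] [AddCommGroup M] [Module R M]
  (B : M →ₗ[R] M →ₗ[R] R) {P P' Q Q' : Submodule R M}

def subquotientPairing (hP' : P'.map B ≤ Q.dualAnnihilator)
    (hP : P.map B ≤ Q'.dualAnnihilator) :
    (P ⧸ P'.comap P.subtype) →ₗ[R] (Q ⧸ Q'.comap Q.subtype) →ₗ[R] R :=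
  (B.domRestrict₁₂ P Q).liftQ₂ _ _
    (fun _ hx => LinearMap.ext fun y =>
      (mem_dualAnnihilator _).1 (hP' (mem_map_of_mem hx)) y y.2)
    (fun y hy => LinearMap.ext fun x =>
      (mem_dualAnnihilator _).1 (hP (mem_map_of_mem x.2)) y hy)

theorem subquotientPairing_mk (hP' : P'.map B ≤ Q.dualAnnihilator)
    (hP : P.map B ≤ Q'.dualAnnihilator) (x : P) (y : Q) :
    B.subquotientPairing hP' hP (Submodule.Quotient.mk x) (Submodule.Quotient.mk y) = B x y :=
  rfl

theorem bijective_subquotientPairing (hB : Function.Injective B)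
    (hP' : P'.map B = Q.dualAnnihilator) (hP : P.map B = Q'.dualAnnihilator) (hQ : Q' ≤ Q)
    (hext : Function.Surjective Q.dualRestrict) :
    Function.Bijective (B.subquotientPairing hP'.le hP.le) := by
  constructor
  · rw [injective_iff_map_eq_zero]
    intro u hu
    obtain ⟨x, rfl⟩ := Submodule.Quotient.mk_surjective _ u
    have hx : B x ∈ P'.map B := hP' ▸ (mem_dualAnnihilator _).2 fun y hy =>
      LinearMap.congr_fun hu (Submodule.Quotient.mk ⟨y, hy⟩)
    obtain ⟨x', hx', hxx'⟩ := hx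
    rw [Submodule.Quotient.mk_eq_zero]
    show (x : M) ∈ P'
    rwa [← hB hxx']
  · intro g
    obtain ⟨f, hf⟩ := hext (g ∘ₗ (Q'.comap Q.subtype).mkQ)
    have hfQ' : f ∈ Q'.dualAnnihilator := (mem_dualAnnihilator _).2 fun y hy => by
      have := LinearMap.congr_fun hf ⟨y, hQ hy⟩
      rw [dualRestrict_apply, comp_apply, mkQ_apply] at this
      rw [this, ← map_zero g]
      exact congrArg g ((Submodule.Quotient.mk_eq_zero _).2 hy)
    obtain ⟨x, hxP, rfl⟩ := hP ▸ hfQ'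
    refine ⟨Submodule.Quotient.mk ⟨x, hxP⟩, LinearMap.ext fun v => ?_⟩
    obtain ⟨y, rfl⟩ := Submodule.Quotient.mk_surjective _ v
    exact LinearMap.congr_fun hf y

end LinearMap

section Filtration

variable {R M : Type*} [CommRing R] [AddCommGroup M] [Module R M] {F : ℕ → Submodule R M} {d : ℕ}

theorem isTorsionFree_quotient_filtration [IsTorsionFree R M] (hFtop : F (d + 1) = ⊥)
    (hsplit : ∀ i ≤ d, IsTorsionFree R (M ⧸ F i)) {k : ℕ} (hk : k ≤ d + 1) :
    IsTorsionFree R (M ⧸ F k) := by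
  rcases hk.lt_or_eq with hk | rfl
  · exact hsplit k (by omega)
  · exact (quotEquivOfEqBot _ hFtop).injective.moduleIsTorsionFree _ (map_smul _)

variable [IsDomain R] [IsPrincipalIdealRing R] [Module.Finite R M]

theorem finrank_filtration_add_finrank_filtration (hF0 : F 0 = ⊤) (hFtop : F (d + 1) = ⊥)
    (hdec : ∀ i, F (i + 1) ≤ F i)
    (hrk : ∀ i ≤ d, finrank R (F i ⧸ (F (i + 1)).comap (F i).subtype) =
      finrank R (F (d - i) ⧸ (F (d - i + 1)).comap (F (d - i)).subtype))
    {j : ℕ} (hj : j ≤ d + 1) :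
    finrank R (F (d + 1 - j)) + finrank R (F j) = finrank R M := by
  induction j with
  | zero => rw [Nat.sub_zero, hFtop, hF0, finrank_bot, finrank_top, zero_add]
  | succ n ih =>
    have hn := finrank_quotient_comap_subtype_add_finrank (hdec n)
    have hmirror := finrank_quotient_comap_subtype_add_finrank (hdec (d - n))
    have hgr := hrk n (by omega)
    have ih := ih (by omega)
    rw [show d + 1 - (n + 1) = d - n by omega]
    rw [show d + 1 - n = d - n + 1 by omega] at ih
    omega

theorem map_filtration_eq_dualAnnihilator (B : M →ₗ[R] M →ₗ[R] R)
    (hB : Function.Bijective B) (hF0 : F 0 = ⊤) (hFtop : F (d + 1) = ⊥)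
    (hdec : ∀ i, F (i + 1) ≤ F i)
    (horth : ∀ i j, i + j = d + 1 → ∀ x ∈ F i, ∀ y ∈ F j, B x y = 0)
    (hrk : ∀ i ≤ d, finrank R (F i ⧸ (F (i + 1)).comap (F i).subtype) =
      finrank R (F (d - i) ⧸ (F (d - i + 1)).comap (F (d - i)).subtype))
    (hsplit : ∀ i ≤ d, IsTorsionFree R (M ⧸ F i)) {j : ℕ} (hj : j ≤ d + 1) :
    (F (d + 1 - j)).map B = (F j).dualAnnihilator := by
  let e := LinearEquiv.ofBijective B hB
  have : Module.Finite R (Dual R M) := Module.Finite.equiv e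
  have : IsTorsionFree R M := e.injective.moduleIsTorsionFree _ (map_smul e)
  have : IsTorsionFree R (M ⧸ F j) := isTorsionFree_quotient_filtration hFtop hsplit hj
  have : IsTorsionFree R (M ⧸ F (d + 1 - j)) :=
    isTorsionFree_quotient_filtration hFtop hsplit (by omega)
  have : IsTorsionFree R (Dual R M ⧸ (F (d + 1 - j)).map B) :=
    (Quotient.equiv _ _ e rfl).symm.injective.moduleIsTorsionFree _ (map_smul _)
  refine eq_of_le_of_finrank_le_of_isTorsionFree ?_ ?_
  · rintro _ ⟨x, hx, rfl⟩
    exact (mem_dualAnnihilator _).2 fun y hy => horth _ _ (by omega) x hx y hy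
  · rw [finrank_dualAnnihilator,
      ← ((F (d + 1 - j)).equivMapOfInjective _ hB.injective).finrank_eq]
    have := finrank_quotient_add_finrank (F j)
    have := finrank_filtration_add_finrank_filtration hF0 hFtop hdec hrk hj
    omega

end Filtration

theorem stmt_0_general
    (A : Type) [CommRing A] [Module.Finite ℤ A]
    (χ : A →ₗ[ℤ] ℤ)
    (hχ : Function.Bijective fun a : A => χ ∘ₗ LinearMap.mulLeft ℤ a)
    (d : ℕ) (F : ℕ → Submodule ℤ A)
    (hF0 : F 0 = ⊤)
    (hFtop : ∀ k, d + 1 ≤ k → F k = ⊥)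
    (hdec : ∀ i, F (i + 1) ≤ F i)
    (hmul : ∀ i j : ℕ, ∀ x ∈ F i, ∀ y ∈ F j, x * y ∈ F (i + j))
    (hrk : ∀ i ≤ d,
      Module.finrank ℤ (↥(F i) ⧸ (F (i + 1)).comap (F i).subtype) =
        Module.finrank ℤ (↥(F (d - i)) ⧸ (F (d - i + 1)).comap (F (d - i)).subtype))
    (hsplit : ∀ i ≤ d, NoZeroSMulDivisors ℤ (A ⧸ F i)) :
    ∀ i ≤ d, ∃ B : (↥(F i) ⧸ (F (i + 1)).comap (F i).subtype) →ₗ[ℤ]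
        (↥(F (d - i)) ⧸ (F (d - i + 1)).comap (F (d - i)).subtype) →ₗ[ℤ] ℤ,
      (∀ (x : F i) (y : F (d - i)),
        B (Submodule.Quotient.mk x) (Submodule.Quotient.mk y) = χ ((x : A) * (y : A))) ∧
      Function.Bijective B := by
  intro i hi
  let B := (LinearMap.mul ℤ A).compr₂ χ
  have horth : ∀ k l, k + l = d + 1 → ∀ x ∈ F k, ∀ y ∈ F l, B x y = 0 := by
    intro k l hkl x hx y hy
    have hxy := hmul k l x hx y hy
    rw [hkl, hFtop _ le_rfl, mem_bot] at hxy
    simp [B, hxy]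
  have hann {j : ℕ} (hj : j ≤ d + 1) := map_filtration_eq_dualAnnihilator B hχ hF0
    (hFtop _ le_rfl) hdec horth hrk (fun k hk => have := hsplit k hk; inferInstance) hj
  have hP' := hann (j := d - i) (by omega)
  have hP := hann (j := d - i + 1) (by omega)
  rw [show d + 1 - (d - i) = i + 1 by omega] at hP'
  rw [show d + 1 - (d - i + 1) = i by omega] at hP
  have := hsplit (d - i) (by omega)
  exact ⟨B.subquotientPairing hP'.le hP.le, B.subquotientPairing_mk hP'.le hP.le,
    B.bijective_subquotientPairing hχ.injective hP' hP (hdec _)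
      (dualRestrict_surjective_of_projective _)⟩

/-- If a free finitely generated abelian group `A` carries a commutative ring
structure and a linear map `χ : A → ℤ` whose associated symmetric pairing `(x,y) ↦ χ (x*y)` is
unimodular, and `F` is a multiplicative decreasing filtration with `F 0 = A`, `F (d+1) = 0`,
with symmetric ranks of adjoint quotients, that splits (all quotients `A ⧸ F i` torsion-free),
then for each `i ≤ d` the induced pairing `grⁱ ⊗ gr^{d-i} → ℤ` is well-defined and unimodular. -/
theorem stmt_0
    (A : Type) [CommRing A] [Module.Free ℤ A] [Module.Finite ℤ A]
    (χ : A →ₗ[ℤ] ℤ)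
    (hχ : Function.Bijective fun a : A => χ ∘ₗ LinearMap.mulLeft ℤ a)
    (d : ℕ) (F : ℕ → Submodule ℤ A)
    (hF0 : F 0 = ⊤)
    (hFtop : ∀ k, d + 1 ≤ k → F k = ⊥)
    (hdec : ∀ i, F (i + 1) ≤ F i)
    (hmul : ∀ i j : ℕ, ∀ x ∈ F i, ∀ y ∈ F j, x * y ∈ F (i + j))
    (hrk : ∀ i ≤ d,
      Module.finrank ℤ (↥(F i) ⧸ (F (i + 1)).comap (F i).subtype) =
        Module.finrank ℤ (↥(F (d - i)) ⧸ (F (d - i + 1)).comap (F (d - i)).subtype))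
    (hsplit : ∀ i ≤ d, NoZeroSMulDivisors ℤ (A ⧸ F i)) :
    ∀ i ≤ d, ∃ B : (↥(F i) ⧸ (F (i + 1)).comap (F i).subtype) →ₗ[ℤ]
        (↥(F (d - i)) ⧸ (F (d - i + 1)).comap (F (d - i)).subtype) →ₗ[ℤ] ℤ,
      (∀ (x : F i) (y : F (d - i)),
        B (Submodule.Quotient.mk x) (Submodule.Quotient.mk y) = χ ((x : A) * (y : A))) ∧
      Function.Bijective B :=
  stmt_0_general A χ hχ d F hF0 hFtop hdec hmul hrk hsplit
end

section
/- Let A be a free finitely generated abelian group with a unimodular bilinear pairing ⟨·,·⟩ : A ⊗ A → ℤ. Let B, C ⊆ A be subgroups such that the quotients A/B and A/C are both torsion-free, ⟨b,c⟩ = 0 for all b ∈ B and c ∈ C, and rk(A/B) = rk(C). Then the induced pairing (A/B) ⊗ C → ℤ, sending [a]⊗c to ⟨a,c⟩, is well-defined and unimodular (the induced map A/B → Hom(C,ℤ) is bijective), and moreover B equals the left orthogonal complement of C, i.e. B = { a ∈ A : ⟨a,c⟩ = 0 for all c ∈ C }. -/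
/-! Since `A ⧸ C` is free, `C` is a direct summand of `A`, so every functional on `C` extends
to `A`; by unimodularity, restriction `a ↦ ⟨a, ·⟩|_C` is then a surjection `A → Hom(C, ℤ)`.
It kills `P`, hence factors through `A ⧸ P`, and a surjection between free `ℤ`-modules of the
same finite rank is bijective. Injectivity says exactly that `P` is the left orthogonal of `C`. -/

namespace Submodule

theorem exists_leftInverse_subtype_of_projective_quotient {R M : Type*} [Ring R]
    [AddCommGroup M] [Module R M] (W : Submodule R M)
    [Module.Projective R (M ⧸ W)] : ∃ r : M →ₗ[R] W, r ∘ₗ W.subtype = LinearMap.id := by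
  have hsplit := (LinearMap.exact_subtype_mkQ W).split_tfae W.injective_subtype W.mkQ_surjective
  exact (hsplit.out 0 1).mp (W.mkQ.exists_rightInverse_of_surjective W.range_mkQ)

theorem dualRestrict_surjective_of_projective_quotient {R M : Type*} [CommRing R]
    [AddCommGroup M] [Module R M] (W : Submodule R M) [Module.Projective R (M ⧸ W)] :
    Function.Surjective W.dualRestrict := by
  obtain ⟨r, hr⟩ := W.exists_leftInverse_subtype_of_projective_quotient
  refine fun f => ⟨f ∘ₗ r, ?_⟩
  change f ∘ₗ r ∘ₗ W.subtype = f
  rw [hr, LinearMap.comp_id]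

end Submodule

/-- Let `A` be a free finitely generated abelian group with a unimodular bilinear
pairing `Bl : A ⊗ A → ℤ`, and let `P, C ⊆ A` be subgroups with `A ⧸ P` and `A ⧸ C`
torsion-free, `⟨P, C⟩ = 0`, and `rk (A ⧸ P) = rk C`. Then the induced pairing
`(A ⧸ P) ⊗ C → ℤ` is well-defined and unimodular, and `P` is the left orthogonal
complement of `C`. -/
theorem stmt_7
    (A : Type) [AddCommGroup A] [Module.Free ℤ A] [Module.Finite ℤ A]
    (Bl : A →ₗ[ℤ] A →ₗ[ℤ] ℤ)
    (hBl : Function.Bijective Bl)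
    (P C : Submodule ℤ A)
    (hP : NoZeroSMulDivisors ℤ (A ⧸ P))
    (hC : NoZeroSMulDivisors ℤ (A ⧸ C))
    (horth : ∀ b ∈ P, ∀ c ∈ C, Bl b c = 0)
    (hrk : Module.finrank ℤ (A ⧸ P) = Module.finrank ℤ ↥C) :
    (∃ φ : (A ⧸ P) →ₗ[ℤ] (↥C →ₗ[ℤ] ℤ),
      (∀ (a : A) (c : C), φ (Submodule.Quotient.mk a) c = Bl a (c : A)) ∧
      Function.Bijective φ) ∧
    (∀ a : A, a ∈ P ↔ ∀ c ∈ C, Bl a c = 0) := by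
  have : Module.Free ℤ (A ⧸ P) := Module.free_of_finite_type_torsion_free'
  have : Module.Free ℤ (A ⧸ C) := Module.free_of_finite_type_torsion_free'
  have : Module.Free ℤ C := Module.free_of_finite_type_torsion_free'
  let ψ : A →ₗ[ℤ] Module.Dual ℤ C := C.dualRestrict ∘ₗ Bl
  have hψ : Function.Surjective ψ :=
    C.dualRestrict_surjective_of_projective_quotient.comp hBl.2
  let φ := P.liftQ ψ fun b hb => LinearMap.ext fun c => horth b hb c c.2
  have hφ : Function.Bijective φ := by
    refine OrzechProperty.bijective_of_surjective_of_finrank_le φ ?_ ?_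
    · exact Function.Surjective.of_comp (g := P.mkQ) hψ
    · rw [Module.finrank_linearMap_self, hrk]
  refine ⟨⟨φ, fun _ _ => rfl, hφ⟩, fun a => ?_⟩
  rw [← Submodule.Quotient.mk_eq_zero, ← map_eq_zero_iff φ hφ.1, LinearMap.ext_iff]
  exact ⟨fun h c hc => h ⟨c, hc⟩, fun h c => h c c.2⟩
end
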